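/- Suppose a first-quadrant cohomological Serre spectral sequence with ℚ coefficients converges to H^*(E) where in a range of total degrees k < N all surviving E_∞ terms lie in rows q ≠ n−1, and the E_2 page in that range consists of these surviving terms together with terms H^p(B; H^{n−1}(F; ℚ)) in row n−1 with n even. Then H^p(B; H^{n−1}(F; ℚ)) = 0 for p < N − n. -/

import Mathlib

/-- Since `1 - r ≠ 0`, each `d_r` (`r ≥ 2`) into or out of `E^{p,q₀}` joins it to a term off
row `q₀`, of total degree `p + q₀ ± 1 < N`. -/
theorem e2_eq_einf_of_offRow_survive {E2 Einf : ℤ → ℤ → ℕ} {N q₀ : ℤ}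
    (hsurvive : ∀ p q : ℤ, p + q < N → q ≠ q₀ → Einf p q = E2 p q)
    (hdiff : ∀ p q : ℤ, E2 p q ≠ Einf p q →
      ∃ r : ℤ, 2 ≤ r ∧
        (E2 (p - r) (q + r - 1) ≠ Einf (p - r) (q + r - 1) ∨
         E2 (p + r) (q - r + 1) ≠ Einf (p + r) (q - r + 1)))
    {p : ℤ} (hp : p + q₀ + 1 < N) : E2 p q₀ = Einf p q₀ := by
  by_contra hne
  obtain ⟨r, hr, hsource | htarget⟩ := hdiff p q₀ hne
  · exact hsource (hsurvive _ _ (by omega) (by omega)).symm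
  · exact htarget (hsurvive _ _ (by omega) (by omega)).symm

theorem serre_ss_row_vanishing_general (n N : ℕ)
    (E2 Einf : ℤ → ℤ → ℕ)
    (hsurvive : ∀ p q : ℤ, p + q < N → q ≠ (n : ℤ) - 1 → Einf p q = E2 p q)
    (hkilled : ∀ p : ℤ, p + ((n : ℤ) - 1) < N → Einf p ((n : ℤ) - 1) = 0)
    (hdiff : ∀ p q : ℤ, E2 p q ≠ Einf p q →
      ∃ r : ℤ, 2 ≤ r ∧
        (E2 (p - r) (q + r - 1) ≠ Einf (p - r) (q + r - 1) ∨
         E2 (p + r) (q - r + 1) ≠ Einf (p + r) (q - r + 1))) :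
    ∀ p : ℤ, 0 ≤ p → p < (N : ℤ) - n → E2 p ((n : ℤ) - 1) = 0 := by
  intro p _ hpN
  rw [e2_eq_einf_of_offRow_survive hsurvive hdiff (by omega)]
  exact hkilled p (by omega)

/-- Row-vanishing in a Serre spectral sequence: in a first-quadrant
cohomological spectral sequence (rational coefficients) converging to
`H^*(E)`, suppose that in total degrees `< N` all surviving `E_∞`-terms lie in
rows `q ≠ n−1`, i.e. `E_∞^{p,q} = E_2^{p,q}` for `q ≠ n−1` and
`E_∞^{p,n−1} = 0` there (`n` even, so row `n−1` consists of the terms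
`H^p(B; H^{n−1}(F; ℚ))`).  Since every differential `d_r` (`r ≥ 2`) has
bidegree `(r, 1−r)` with `1−r ≠ 0` and hence changes the row index, any term
where `E_2 ≠ E_∞` is connected by some differential to another such term.
Then `E_2^{p,n−1} = H^p(B; H^{n−1}(F; ℚ)) = 0` for `p < N − n`.

Here `E2 Einf : ℤ → ℤ → ℕ` record the dimensions of the pages, vanishing
outside the first quadrant. -/
theorem serre_ss_row_vanishing (n N : ℕ) (hn : Even n)
    (E2 Einf : ℤ → ℤ → ℕ)
    (hquad : ∀ p q : ℤ, p < 0 ∨ q < 0 → E2 p q = 0 ∧ Einf p q = 0)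
    (hsurvive : ∀ p q : ℤ, p + q < N → q ≠ (n : ℤ) - 1 → Einf p q = E2 p q)
    (hkilled : ∀ p : ℤ, p + ((n : ℤ) - 1) < N → Einf p ((n : ℤ) - 1) = 0)
    (hdiff : ∀ p q : ℤ, E2 p q ≠ Einf p q →
      ∃ r : ℤ, 2 ≤ r ∧
        (E2 (p - r) (q + r - 1) ≠ Einf (p - r) (q + r - 1) ∨
         E2 (p + r) (q - r + 1) ≠ Einf (p + r) (q - r + 1))) :
    ∀ p : ℤ, 0 ≤ p → p < (N : ℤ) - n → E2 p ((n : ℤ) - 1) = 0 :=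
  serre_ss_row_vanishing_general n N E2 Einf hsurvive hkilled hdiff
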